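/- For d ≥ 2 and m ≥ 1, the d-Narayana polynomial is palindromic (self-reciprocal): N_{d,m}(x) = x^{(d-1)(m-1)} · N_{d,m}(1/x), equivalently its coefficients satisfy [xⁿ]N_{d,m} = [x^{(d-1)(m-1)-n}]N_{d,m} for all 0 ≤ n ≤ (d-1)(m-1). -/

import Mathlib

/-!
The coefficient of `xⁿ` in the hypergeometric series is `P(n)` for the polynomial
`P(t) = ∏_{i<d} (t+i+1)_m / (i+1)_m` of degree `md`. Hence `N(x) = (1-x)^(md+1) ∑ P(n) xⁿ` has
coefficients `h_n = ∑_k (-1)^k C(md+1,k) P(n-k)`, and since the `(md+1)`-st finite difference of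
`P` vanishes, also `h_n = -∑_{k>n} (-1)^k C(md+1,k) P(n-k)`. The roots `-1, …, -(d+m-1)` of `P`
kill the terms with `k < n+d+m`, and the reflection `P(-t-d-m) = (-1)^(md) P(t)` turns what is
left, after `k ↦ md+1-k`, into `h_{(d-1)(m-1)-n}`.
-/

open Polynomial

/-- Pochhammer symbol (rising factorial) `(a)_n` for real `a`. -/
noncomputable def asc (a : ℝ) (n : ℕ) : ℝ := (ascPochhammer ℝ n).eval a

open Finset

section HStar

variable {R : Type*} [CommRing R]

/-- The coefficient of `xⁿ` in `(1 - x)^M · ∑ₖ P(k) xᵏ` (the `h*`-vector of Ehrhart theory). -/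
noncomputable def hStarCoeff (P : R[X]) (M n : ℕ) : R :=
  ∑ k ∈ range (n + 1), (-1) ^ k * M.choose k * P.eval ((n - k : ℕ) : R)

theorem Polynomial.sum_neg_one_pow_choose_mul_eval_sub_eq_zero {P : R[X]} {M : ℕ}
    (hP : P.natDegree < M) (t : R) :
    ∑ k ∈ range (M + 1), (-1) ^ k * M.choose k * P.eval (t - k) = 0 := by
  have h := congr_fun (fwdDiff_iter_eq_zero_of_degree_lt hP) (t - M)
  rw [fwdDiff_iter_eq_sum_shift, Pi.zero_apply] at h
  rw [← sum_range_reflect, ← h]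
  refine sum_congr rfl fun k hk => ?_
  have hk : k ≤ M := Nat.lt_succ_iff.mp (mem_range.mp hk)
  rw [Nat.add_sub_cancel, Nat.choose_symm hk, Nat.cast_sub hk, nsmul_eq_mul, mul_one,
    zsmul_eq_mul]
  push_cast
  ring_nf

theorem hStarCoeff_eq_neg_sum_Ico {P : R[X]} {D r : ℕ} (hP : P.natDegree ≤ D)
    (hroot : ∀ s ∈ Icc 1 r, P.eval (-(s : R)) = 0) (n : ℕ) :
    hStarCoeff P (D + 1) n =
      -∑ k ∈ Ico (n + r + 1) (D + 2), (-1) ^ k * (D + 1).choose k * P.eval ((n : R) - k) := by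
  set F : ℕ → R := fun k => (-1) ^ k * (D + 1).choose k * P.eval ((n : R) - k)
  set U := range (n + r + D + 2)
  have hF_high : ∀ k, D + 1 < k → F k = 0 := fun k hk => by
    simp [F, Nat.choose_eq_zero_of_lt hk]
  have hF_root : ∀ k, n < k → k ≤ n + r → F k = 0 := fun k h₁ h₂ => by
    have hk : (n : R) - k = -((k - n : ℕ) : R) := by push_cast [Nat.cast_sub h₁.le]; ring
    simp only [F, hk, hroot (k - n) (mem_Icc.mpr (by omega)), mul_zero]
  have hlow : hStarCoeff P (D + 1) n = ∑ k ∈ U with k ≤ n + r, F k := by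
    refine sum_subset_zero_on_sdiff (fun k hk => ?_) (fun k hk => ?_) (fun k hk => ?_)
    · simp only [mem_range, mem_filter, U] at hk ⊢; omega
    · simp only [mem_sdiff, mem_range, mem_filter, U] at hk
      exact hF_root k (by omega) hk.1.2
    · simp only [mem_range] at hk
      simp [F, Nat.cast_sub (Nat.lt_succ_iff.mp hk)]
  have hfull : ∑ k ∈ U, F k = 0 := by
    rw [← sum_subset (range_subset_range.mpr (by omega : D + 2 ≤ n + r + D + 2))
      fun k hk hk' => hF_high k ?_]
    · exact sum_neg_one_pow_choose_mul_eval_sub_eq_zero (Nat.lt_succ_of_le hP) n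
    · simp only [mem_range] at hk'; omega
  have hhigh : ∑ k ∈ U with ¬k ≤ n + r, F k = ∑ k ∈ Ico (n + r + 1) (D + 2), F k := by
    refine (sum_subset (fun k hk => ?_) fun k hk hk' => hF_high k ?_).symm
    · simp only [mem_Ico, mem_filter, mem_range, U] at hk ⊢; omega
    · simp only [mem_Ico, mem_filter, mem_range, U] at hk hk'; omega
  rw [hlow, ← hhigh, eq_neg_iff_add_eq_zero, sum_filter_add_sum_filter_not, hfull]

theorem hStarCoeff_eq_zero_of_lt {P : R[X]} {D r : ℕ} (hP : P.natDegree ≤ D)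
    (hroot : ∀ s ∈ Icc 1 r, P.eval (-(s : R)) = 0) {n : ℕ} (hn : D < n + r) :
    hStarCoeff P (D + 1) n = 0 := by
  rw [hStarCoeff_eq_neg_sum_Ico hP hroot, Ico_eq_empty_of_le (by omega), sum_empty, neg_zero]

theorem hStarCoeff_symm {P : R[X]} {D r : ℕ} (hP : P.natDegree ≤ D)
    (hroot : ∀ s ∈ Icc 1 r, P.eval (-(s : R)) = 0)
    (hrefl : ∀ t : R, P.eval (-t - (r + 1)) = (-1) ^ D * P.eval t) {n : ℕ} (hn : n + r ≤ D) :
    hStarCoeff P (D + 1) n = hStarCoeff P (D + 1) (D - r - n) := by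
  have hIco : Ico (n + r + 1) (D + 2) = Ico (D + 1 + 1 - (D - r - n + 1)) (D + 1 + 1 - 0) := by
    congr 1; omega
  rw [hStarCoeff_eq_neg_sum_Ico hP hroot, hIco, ← sum_Ico_reflect _ _ (by omega),
    Nat.Ico_zero_eq_range, hStarCoeff, ← sum_neg_distrib]
  refine sum_congr rfl fun j hj => ?_
  obtain ⟨e, rfl⟩ : ∃ e, D = n + r + j + e := ⟨D - n - r - j, by simp at hj; omega⟩
  have h₁ : n + r + j + e + 1 - j = n + r + e + 1 := by omega
  have h₂ : n + r + j + e - r - n - j = e := by omega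
  have h₃ : (n : R) - ((n + r + e + 1 : ℕ) : R) = -(e : R) - (r + 1) := by push_cast; ring
  rw [h₁, h₂, h₃, hrefl, Nat.choose_symm_of_eq_add (by omega : n + r + j + e + 1 = _ + j)]
  have hsq : ((-1 : R) ^ (n + r + e)) ^ 2 = 1 := by rw [← pow_mul, pow_mul', neg_one_sq, one_pow]
  linear_combination (-1) ^ j * ((n + r + j + e + 1).choose j : R) * P.eval (e : R) * hsq

end HStar

theorem Polynomial.summable_eval_mul_pow (P : ℝ[X]) {x : ℝ} (hx : |x| < 1) :
    Summable fun n : ℕ => P.eval (n : ℝ) * x ^ n := by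
  simp_rw [eval_eq_sum_range, sum_mul]
  refine summable_sum fun i _ => ?_
  simpa [mul_assoc] using
    (summable_pow_mul_geometric_of_norm_lt_one i (by simpa using hx)).mul_left (P.coeff i)

theorem one_sub_pow_mul_tsum_eval_mul_pow (P : ℝ[X]) (M : ℕ) {x : ℝ} (hx : |x| < 1) :
    (1 - x) ^ M * ∑' n : ℕ, P.eval (n : ℝ) * x ^ n = ∑' n : ℕ, hStarCoeff P M n * x ^ n := by
  have hbinom : (1 - x) ^ M = ∑' k : ℕ, (-1) ^ k * M.choose k * x ^ k := by
    rw [tsum_eq_sum (s := range (M + 1)) fun k hk => by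
      simp [Nat.choose_eq_zero_of_lt (by simpa using hk : M < k)]]
    rw [sub_eq_neg_add, add_pow]
    refine sum_congr rfl fun k _ => ?_
    rw [neg_pow]; ring
  have hfin : Summable fun k : ℕ => ‖(-1) ^ k * M.choose k * x ^ k‖ :=
    summable_of_ne_finset_zero (s := range (M + 1)) fun k hk => by
      simp [Nat.choose_eq_zero_of_lt (by simpa using hk : M < k)]
  rw [hbinom, tsum_mul_tsum_eq_tsum_sum_range_of_summable_norm hfin
    (P.summable_eval_mul_pow hx).abs]
  refine tsum_congr fun n => ?_
  rw [hStarCoeff, sum_mul]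
  refine sum_congr rfl fun k hk => ?_
  rw [← pow_sub_mul_pow x (Nat.lt_succ_iff.mp (mem_range.mp hk))]
  ring

theorem Polynomial.coeff_eq_of_eval_eq_tsum {N : ℝ[X]} {a : ℕ → ℝ} {K : ℕ}
    (ha : ∀ n, K < n → a n = 0) (hN : ∀ x : ℝ, |x| < 1 → N.eval x = ∑' n, a n * x ^ n)
    (n : ℕ) : N.coeff n = a n := by
  set Q : ℝ[X] := ∑ k ∈ range (K + 1), C (a k) * X ^ k
  have hNQ : N = Q := by
    refine eq_of_infinite_eval_eq _ _ ((Set.Ioo_infinite (by norm_num : (-1 : ℝ) < 1)).mono ?_)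
    intro x hx
    rw [Set.mem_ofPred_eq, hN x (abs_lt.mpr hx), eval_finsetSum,
      tsum_eq_sum (s := range (K + 1)) fun k hk => by rw [ha k (by simpa using hk), zero_mul]]
    simp
  rw [hNQ, finsetSum_coeff]
  simp only [coeff_C_mul_X_pow]
  rw [sum_ite_eq]
  split_ifs with h
  · rfl
  · exact (ha n (by simpa using h)).symm

theorem asc_mul_asc_add (a : ℝ) (n k : ℕ) : asc a n * asc (a + n) k = asc a (n + k) := by
  simpa [asc, eval_comp] using congr_arg (eval a) (ascPochhammer_mul (S := ℝ) n k)

theorem asc_add_div_asc {a : ℝ} (ha : 0 < a) (m n : ℕ) :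
    asc (a + m) n / asc a n = asc (a + n) m / asc a m := by
  have hn : asc a n ≠ 0 := (ascPochhammer_pos n a ha).ne'
  have hm : asc a m ≠ 0 := (ascPochhammer_pos m a ha).ne'
  rw [div_eq_div_iff hn hm, mul_comm, asc_mul_asc_add, mul_comm, asc_mul_asc_add, add_comm]

noncomputable def shiftedPochhammerProd (d m : ℕ) : ℝ[X] :=
  ∏ i ∈ range d, (ascPochhammer ℝ m).comp (X + C ((i : ℝ) + 1))

noncomputable def narayanaCoeffPoly (d m : ℕ) : ℝ[X] :=
  C ((shiftedPochhammerProd d m).eval 0)⁻¹ * shiftedPochhammerProd d m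

theorem eval_shiftedPochhammerProd (d m : ℕ) (t : ℝ) :
    (shiftedPochhammerProd d m).eval t = ∏ i ∈ range d, asc (t + i + 1) m := by
  simp [shiftedPochhammerProd, eval_prod, eval_comp, asc, add_assoc]

theorem natDegree_shiftedPochhammerProd_le (d m : ℕ) :
    (shiftedPochhammerProd d m).natDegree ≤ m * d := by
  calc (shiftedPochhammerProd d m).natDegree
      ≤ ∑ i ∈ range d, ((ascPochhammer ℝ m).comp (X + C ((i : ℝ) + 1))).natDegree :=
        natDegree_prod_le _ _
    _ = m * d := by
        simp only [natDegree_comp, ascPochhammer_natDegree, natDegree_X_add_C, mul_one,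
          sum_const, card_range, smul_eq_mul, mul_comm]

theorem eval_neg_shiftedPochhammerProd {d m : ℕ} (hd : 1 ≤ d) (hm : 1 ≤ m) {s : ℕ}
    (hs : s ∈ Icc 1 (d + m - 1)) : (shiftedPochhammerProd d m).eval (-(s : ℝ)) = 0 := by
  rw [mem_Icc] at hs
  rw [eval_shiftedPochhammerProd]
  refine prod_eq_zero (i := min (d - 1) (s - 1)) (by simp; omega) ?_
  have h : -(s : ℝ) + (min (d - 1) (s - 1) : ℕ) + 1 = -((s - 1 - min (d - 1) (s - 1) : ℕ) : ℝ) := by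
    rw [Nat.cast_sub (by omega), Nat.cast_sub (by omega)]; push_cast; ring
  rw [h, asc, ascPochhammer_eval_neg_coe_nat_of_lt (by omega)]

theorem eval_neg_sub_shiftedPochhammerProd (d m : ℕ) (t : ℝ) :
    (shiftedPochhammerProd d m).eval (-t - (d + m)) =
      (-1) ^ (m * d) * (shiftedPochhammerProd d m).eval t := by
  have hsign : (-1 : ℝ) ^ (m * d) = ∏ _i ∈ range d, (-1 : ℝ) ^ m := by
    rw [prod_const, card_range, pow_mul]
  rw [eval_shiftedPochhammerProd, eval_shiftedPochhammerProd, ← prod_range_reflect _ d, hsign,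
    ← prod_mul_distrib]
  refine prod_congr rfl fun i hi => ?_
  have hi : i < d := mem_range.mp hi
  have h : -t - (d + m) + ((d - 1 - i : ℕ) : ℝ) + 1 = -(t + i + m) := by
    rw [Nat.cast_sub (by omega : i ≤ d - 1), Nat.cast_sub (by omega : 1 ≤ d)]
    push_cast; ring
  rw [asc, asc, h, ascPochhammer_eval_neg_eq_descPochhammer, descPochhammer_eval_eq_ascPochhammer,
    add_sub_cancel_right]

theorem natDegree_narayanaCoeffPoly_le (d m : ℕ) : (narayanaCoeffPoly d m).natDegree ≤ m * d :=
  natDegree_C_mul_le _ _ |>.trans (natDegree_shiftedPochhammerProd_le d m)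

theorem eval_natCast_narayanaCoeffPoly (d m n : ℕ) :
    (narayanaCoeffPoly d m).eval (n : ℝ) =
      ∏ i ∈ range d, asc ((m : ℝ) + i + 1) n / asc ((i : ℝ) + 1) n := by
  rw [narayanaCoeffPoly, eval_mul, eval_C, eval_shiftedPochhammerProd,
    eval_shiftedPochhammerProd, ← prod_inv_distrib, ← prod_mul_distrib]
  refine prod_congr rfl fun i _ => ?_
  have h := asc_add_div_asc (by positivity : (0 : ℝ) < i + 1) m n
  rw [zero_add, inv_mul_eq_div, show (n : ℝ) + i + 1 = i + 1 + n by ring,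
    show (m : ℝ) + i + 1 = i + 1 + m by ring, h]

theorem eval_neg_narayanaCoeffPoly {d m : ℕ} (hd : 1 ≤ d) (hm : 1 ≤ m) {s : ℕ}
    (hs : s ∈ Icc 1 (d + m - 1)) : (narayanaCoeffPoly d m).eval (-(s : ℝ)) = 0 := by
  rw [narayanaCoeffPoly, eval_mul, eval_neg_shiftedPochhammerProd hd hm hs, mul_zero]

theorem eval_neg_sub_narayanaCoeffPoly (d m : ℕ) (t : ℝ) :
    (narayanaCoeffPoly d m).eval (-t - (d + m)) =
      (-1) ^ (m * d) * (narayanaCoeffPoly d m).eval t := by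
  simp only [narayanaCoeffPoly, eval_mul, eval_C, eval_neg_sub_shiftedPochhammerProd]
  ring

theorem stmt_17 (d m : ℕ) (hd : 2 ≤ d) (hm : 1 ≤ m) (N : Polynomial ℝ)
    (hN : ∀ x : ℝ, |x| < 1 →
      N.eval x = (1 - x) ^ (m * d + 1) *
        ∑' n : ℕ, (∏ i ∈ Finset.range d,
          asc ((m : ℝ) + i + 1) n / asc ((i : ℝ) + 1) n) * x ^ n) :
    ∀ n : ℕ, n ≤ (d - 1) * (m - 1) →
      N.coeff n = N.coeff ((d - 1) * (m - 1) - n) := by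
  have hd₁ : 1 ≤ d := by omega
  have hK : (d - 1) * (m - 1) + (d + m - 1) = m * d := by
    obtain ⟨d, rfl⟩ := Nat.exists_eq_add_of_le' hd₁
    obtain ⟨m, rfl⟩ := Nat.exists_eq_add_of_le' hm
    simp only [Nat.add_sub_cancel]
    ring_nf
    omega
  have hdeg := natDegree_narayanaCoeffPoly_le d m
  have hroot := fun s (hs : s ∈ Icc 1 (d + m - 1)) => eval_neg_narayanaCoeffPoly hd₁ hm hs
  have hrefl : ∀ t : ℝ, (narayanaCoeffPoly d m).eval (-t - ((d + m - 1 : ℕ) + 1)) =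
      (-1) ^ (m * d) * (narayanaCoeffPoly d m).eval t := by
    rw [Nat.cast_sub (by omega)]
    push_cast
    simpa using eval_neg_sub_narayanaCoeffPoly d m
  have hcoeff : ∀ j, N.coeff j = hStarCoeff (narayanaCoeffPoly d m) (m * d + 1) j := by
    refine coeff_eq_of_eval_eq_tsum (K := (d - 1) * (m - 1))
      (fun j hj => hStarCoeff_eq_zero_of_lt hdeg hroot (by omega)) fun x hx => ?_
    simp_rw [hN x hx, ← eval_natCast_narayanaCoeffPoly]
    exact one_sub_pow_mul_tsum_eval_mul_pow _ _ hx
  intro n hn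
  rw [hcoeff, hcoeff, show (d - 1) * (m - 1) - n = m * d - (d + m - 1) - n by omega]
  exact hStarCoeff_symm hdeg hroot hrefl (by omega)
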